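/- Any submodule M of R^n contains a unique maximal reachability submodule M*_0, namely the sum of all reachability submodules contained in M, and this sum is itself a reachability submodule contained in M. -/

import Mathlib

open Matrix

variable {R : Type*} [CommRing R] {n m : ℕ}

/-- `U` is `(A,B)`-invariant: `A·U ⊆ U + im B`. -/
def ABInvariant (A : Matrix (Fin n) (Fin n) R) (B : Matrix (Fin n) (Fin m) R)
    (U : Submodule R (Fin n → R)) : Prop :=
  ∀ x ∈ U, A.mulVec x ∈ U ⊔ LinearMap.range B.mulVecLin

/-- `x` is reached from `0` at time `r` by a trajectory staying in `U`. -/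
def ABReached (A : Matrix (Fin n) (Fin n) R) (B : Matrix (Fin n) (Fin m) R)
    (U : Submodule R (Fin n → R)) (x : Fin n → R) (r : ℕ) : Prop :=
  ∃ (u : ℕ → Fin m → R) (xs : ℕ → Fin n → R),
    xs 0 = 0 ∧ (∀ k, xs (k + 1) = A.mulVec (xs k) + B.mulVec (u k)) ∧
    (∀ k, 1 ≤ k → k ≤ r → xs k ∈ U) ∧ xs r = x

/-- `U` is a reachability submodule. -/
def ABReachability (A : Matrix (Fin n) (Fin n) R) (B : Matrix (Fin n) (Fin m) R)
    (U : Submodule R (Fin n → R)) : Prop :=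
  ABInvariant A B U ∧ ∀ x ∈ U, ∃ r, ABReached A B U x r

/-
Reachability submodules are closed under arbitrary sums. Invariance passes to sums because
`U ↦ A⁻¹(U + im B)` is monotone. For reachability, the states reachable inside `U` form a submodule
(trajectories add and scale, and one of two trajectories can be delayed by idling at `0` so that both
end at the same time), monotone in `U`; a sum of submodules each contained in its own reachable
submodule is therefore contained in its reachable submodule.
-/

namespace ABReached

variable {A : Matrix (Fin n) (Fin n) R} {B : Matrix (Fin n) (Fin m) R}
  {U : Submodule R (Fin n → R)} {x y : Fin n → R} {r : ℕ}

lemma zero : ABReached A B U 0 0 :=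
  ⟨0, 0, rfl, fun _ => by simp, fun _ _ _ => by omega, rfl⟩

lemma mono {V : Submodule R (Fin n → R)} (hUV : U ≤ V) (h : ABReached A B U x r) :
    ABReached A B V x r := by
  obtain ⟨u, xs, h0, hstep, hmem, hend⟩ := h
  exact ⟨u, xs, h0, hstep, fun k h1 h2 => hUV (hmem k h1 h2), hend⟩

lemma delay (h : ABReached A B U x r) (t : ℕ) : ABReached A B U x (t + r) := by
  obtain ⟨u, xs, h0, hstep, hmem, hend⟩ := h
  refine ⟨fun k => if k < t then 0 else u (k - t), fun k => xs (k - t), by simp [h0],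
    fun k => ?_, fun k _ hk => ?_, by simp [hend]⟩
  · by_cases hkt : k < t
    · simp [hkt, Nat.sub_eq_zero_of_le hkt.le, Nat.sub_eq_zero_of_le hkt, h0]
    · simp [hkt, Nat.sub_add_comm (not_lt.mp hkt), hstep]
  · by_cases hkt : k ≤ t
    · simp [Nat.sub_eq_zero_of_le hkt, h0]
    · exact hmem (k - t) (by omega) (by omega)

lemma add (hx : ABReached A B U x r) (hy : ABReached A B U y r) :
    ABReached A B U (x + y) r := by
  obtain ⟨u, xs, h0, hstep, hmem, hend⟩ := hx
  obtain ⟨v, ys, h0', hstep', hmem', hend'⟩ := hy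
  refine ⟨u + v, xs + ys, by simp [h0, h0'], fun k => ?_,
    fun k h1 h2 => U.add_mem (hmem k h1 h2) (hmem' k h1 h2), by simp [hend, hend']⟩
  simp only [Pi.add_apply, hstep, hstep', Matrix.mulVec_add]
  abel

lemma smul (c : R) (h : ABReached A B U x r) : ABReached A B U (c • x) r := by
  obtain ⟨u, xs, h0, hstep, hmem, hend⟩ := h
  refine ⟨c • u, c • xs, by simp [h0], fun k => ?_,
    fun k h1 h2 => U.smul_mem c (hmem k h1 h2), by simp [hend]⟩
  simp only [Pi.smul_apply, hstep, Matrix.mulVec_smul, smul_add]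

end ABReached

def reachableIn (A : Matrix (Fin n) (Fin n) R) (B : Matrix (Fin n) (Fin m) R)
    (U : Submodule R (Fin n → R)) : Submodule R (Fin n → R) where
  carrier := {x | ∃ r, ABReached A B U x r}
  zero_mem' := ⟨0, ABReached.zero⟩
  add_mem' := by
    rintro x y ⟨r, hx⟩ ⟨s, hy⟩
    refine ⟨s + r, (hx.delay s).add ?_⟩
    rw [Nat.add_comm]
    exact hy.delay r
  smul_mem' := fun c _ ⟨r, hx⟩ => ⟨r, hx.smul c⟩

lemma reachableIn_mono (A : Matrix (Fin n) (Fin n) R) (B : Matrix (Fin n) (Fin m) R) :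
    Monotone (reachableIn A B) :=
  fun _ _ hUV _ ⟨r, hx⟩ => ⟨r, hx.mono hUV⟩

lemma abInvariant_iff_le_comap (A : Matrix (Fin n) (Fin n) R) (B : Matrix (Fin n) (Fin m) R)
    (U : Submodule R (Fin n → R)) :
    ABInvariant A B U ↔ U ≤ (U ⊔ LinearMap.range B.mulVecLin).comap A.mulVecLin :=
  Iff.rfl

lemma abReachability_iff (A : Matrix (Fin n) (Fin n) R) (B : Matrix (Fin n) (Fin m) R)
    (U : Submodule R (Fin n → R)) :
    ABReachability A B U ↔ ABInvariant A B U ∧ U ≤ reachableIn A B U :=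
  Iff.rfl

lemma ABInvariant.sSup {A : Matrix (Fin n) (Fin n) R} {B : Matrix (Fin n) (Fin m) R}
    {S : Set (Submodule R (Fin n → R))} (hS : ∀ U ∈ S, ABInvariant A B U) :
    ABInvariant A B (sSup S) := by
  rw [abInvariant_iff_le_comap]
  refine sSup_le fun U hU => ((abInvariant_iff_le_comap A B U).mp (hS U hU)).trans ?_
  exact Submodule.comap_mono (sup_le_sup_right (le_sSup hU) _)

lemma ABReachability.sSup {A : Matrix (Fin n) (Fin n) R} {B : Matrix (Fin n) (Fin m) R}
    {S : Set (Submodule R (Fin n → R))} (hS : ∀ U ∈ S, ABReachability A B U) :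
    ABReachability A B (sSup S) := by
  rw [abReachability_iff]
  refine ⟨ABInvariant.sSup fun U hU => (hS U hU).1, sSup_le fun U hU => ?_⟩
  exact ((abReachability_iff A B U).mp (hS U hU)).2.trans (reachableIn_mono A B (le_sSup hU))

theorem stmt_4 (A : Matrix (Fin n) (Fin n) R) (B : Matrix (Fin n) (Fin m) R)
    (M : Submodule R (Fin n → R)) :
    ABReachability A B (sSup {U : Submodule R (Fin n → R) | ABReachability A B U ∧ U ≤ M}) ∧
    sSup {U : Submodule R (Fin n → R) | ABReachability A B U ∧ U ≤ M} ≤ M ∧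
    ∀ U : Submodule R (Fin n → R), ABReachability A B U → U ≤ M →
      U ≤ sSup {U : Submodule R (Fin n → R) | ABReachability A B U ∧ U ≤ M} :=
  ⟨ABReachability.sSup fun _ hU => hU.1, sSup_le fun _ hU => hU.2,
    fun _ hR hM => le_sSup ⟨hR, hM⟩⟩
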